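/- (Theorem 1, single-mode case with cell boundaries through the origin.) Let A ∈ ℝ^{n×n}, B ∈ ℝ^{n×p}, C ∈ ℝ^{k×n} define a mode of the concrete PWA system, and F ∈ ℝ^{m×m}, G ∈ ℝ^{m×q}, H ∈ ℝ^{k×m}, L ∈ ℝ^{q×m} define the transformed linear abstraction. Let P ∈ ℝ^{n×m}, Q ∈ ℝ^{p×m} satisfy H = C P and P F = A P + B Q, and let R ∈ ℝ^{p×q}, K ∈ ℝ^{p×n} be interface gains. Set N = n + m, A′ = diag(A + B K, F + G L), C′ = [C 0] ∈ ℝ^{k×N}. Let M be a symmetric positive definite N×N matrix, λ > 0, κ > 0, E a b×N matrix and W a symmetric matrix with nonnegative entries, such that M − C′ᵀC′ ⪰ 0 and A′ᵀM + MA′ + EᵀWE + λM ⪯ 0. Suppose x₁ : ℝ → ℝⁿ and x₂ : ℝ → ℝᵐ satisfy, for all t ≥ 0: x₁ has derivative A x₁(t) + B u₁(t) + c(t) at t with u₁(t) = R ū₂(t) + (Q + R L) x₂(t) + K(x₁(t) − P x₂(t)); x₂ has derivative (F + G L) x₂(t) + G ū₂(t) at t; the joint state ω(t) = (x₁(t)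 − P x₂(t), x₂(t)) ∈ ℝ^N satisfies E ω(t) ≥ 0 entrywise; and the vectors v₁(t) = ((B R − P G) L x₂(t), 0), v₂(t) = ((B R − P G) ū₂(t), G ū₂(t)), c′(t) = (c(t), 0) in ℝ^N satisfy √(v₁(t)ᵀMv₁(t)) ≤ β₁, √(v₂(t)ᵀMv₂(t)) ≤ β₂, √(c′(t)ᵀMc′(t)) ≤ β₃. Then for all t ≥ 0, the output error satisfies ‖C x₁(t) − H x₂(t)‖ ≤ max( κ·V(ω(0)), (2/λ)(β₁ + β₂ + β₃) ), where V(ω) = (1/κ)√(ωᵀMω). -/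

import Mathlib

/-!
The joint state `ω = (x₁ - P x₂, x₂)` obeys `ω' = A' ω + v₁ + v₂ + c'`: the simulation
relation `P F = A P + B Q` cancels every other term. Along this flow the LMI and the cell
condition `E ω ≥ 0` (with `W ≥ 0` entrywise) give, for `V = ωᵀ M ω`,
`V' ≤ -λ V + 2 (β₁ + β₂ + β₃) √V` by Cauchy–Schwarz and the triangle inequality for the
`M`-seminorm. A fencing argument turns this into
`√V(t) ≤ max (√V(0)) (2 (β₁ + β₂ + β₃) / λ)`, and `M ⪰ C'ᵀ C'` bounds the output error
`C x₁ - H x₂ = C' ω` by `√V`.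
-/

open Matrix

section WeightedSeminorm

variable {ι : Type*} [Fintype ι] {M : Matrix ι ι ℝ}

lemma Matrix.PosSemidef.toSeminormedAddCommGroup_norm_eq (hM : M.PosSemidef) (x : ι → ℝ) :
    @norm _ (M.toSeminormedAddCommGroup hM).toNorm x = √(x ⬝ᵥ M *ᵥ x) := by
  rw [dotProduct_comm]; rfl

lemma Matrix.PosSemidef.toInnerProductSpace_inner_eq (hM : M.PosSemidef) (x y : ι → ℝ) :
    @inner ℝ _ (M.toInnerProductSpace hM).toInner x y = x ⬝ᵥ M *ᵥ y := by
  rw [dotProduct_comm]; rfl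

lemma Matrix.PosSemidef.dotProduct_mulVec_comm (hM : M.PosSemidef) (x y : ι → ℝ) :
    x ⬝ᵥ M *ᵥ y = y ⬝ᵥ M *ᵥ x := by
  let _ := M.toSeminormedAddCommGroup hM
  let _ := M.toInnerProductSpace hM
  have := real_inner_comm y x
  rwa [hM.toInnerProductSpace_inner_eq, hM.toInnerProductSpace_inner_eq] at this

lemma Matrix.PosSemidef.dotProduct_mulVec_le (hM : M.PosSemidef) (x y : ι → ℝ) :
    x ⬝ᵥ M *ᵥ y ≤ √(x ⬝ᵥ M *ᵥ x) * √(y ⬝ᵥ M *ᵥ y) := by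
  let _ := M.toSeminormedAddCommGroup hM
  let _ := M.toInnerProductSpace hM
  have := real_inner_le_norm x y
  rwa [hM.toInnerProductSpace_inner_eq, hM.toSeminormedAddCommGroup_norm_eq,
    hM.toSeminormedAddCommGroup_norm_eq] at this

lemma Matrix.PosSemidef.sqrt_dotProduct_mulVec_add_le (hM : M.PosSemidef) (x y : ι → ℝ) :
    √((x + y) ⬝ᵥ M *ᵥ (x + y)) ≤ √(x ⬝ᵥ M *ᵥ x) + √(y ⬝ᵥ M *ᵥ y) := by
  have := @norm_add_le _ (M.toSeminormedAddCommGroup hM).toSeminormedAddGroup x y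
  rwa [hM.toSeminormedAddCommGroup_norm_eq, hM.toSeminormedAddCommGroup_norm_eq,
    hM.toSeminormedAddCommGroup_norm_eq] at this

end WeightedSeminorm

section Calculus

variable {ι κ : Type*} {t : ℝ}

theorem HasDerivAt.matrix_mulVec [Fintype ι] [Fintype κ] {f : ℝ → ι → ℝ} {f' : ι → ℝ}
    (A : Matrix κ ι ℝ) (hf : HasDerivAt f f' t) : HasDerivAt (fun s => A *ᵥ f s) (A *ᵥ f') t :=
  (LinearMap.toContinuousLinearMap (mulVecLin A)).hasFDerivAt.comp_hasDerivAt t hf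

theorem HasDerivAt.dotProduct [Fintype ι] {f g : ℝ → ι → ℝ} {f' g' : ι → ℝ}
    (hf : HasDerivAt f f' t) (hg : HasDerivAt g g' t) :
    HasDerivAt (fun s => f s ⬝ᵥ g s) (f' ⬝ᵥ g t + f t ⬝ᵥ g') t := by
  unfold _root_.dotProduct
  rw [← Finset.sum_add_distrib]
  exact HasDerivAt.fun_sum fun i _ => (hasDerivAt_pi.1 hf i).mul (hasDerivAt_pi.1 hg i)

theorem HasDerivAt.sumElim {f : ℝ → ι → ℝ} {g : ℝ → κ → ℝ} {f' : ι → ℝ} {g' : κ → ℝ}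
    (hf : HasDerivAt f f' t) (hg : HasDerivAt g g' t) :
    HasDerivAt (fun s => f s ⊕ᵥ g s) (f' ⊕ᵥ g') t :=
  hasDerivAt_pi.2 <| Sum.rec (hasDerivAt_pi.1 hf) (hasDerivAt_pi.1 hg)

theorem sqrt_le_max_of_hasDerivAt_le {V V' : ℝ → ℝ} {lam β : ℝ} (hlam : 0 < lam)
    (hV : ∀ t ≥ 0, HasDerivAt V (V' t) t)
    (hV' : ∀ t ≥ 0, V' t ≤ -lam * V t + 2 * β * √(V t)) (ht : 0 ≤ t) :
    √(V t) ≤ max (√(V 0)) (2 * β / lam) := by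
  set r := max (√(V 0)) (2 * β / lam)
  have hr : 0 ≤ r := le_max_of_le_left (Real.sqrt_nonneg _)
  have hβr : 2 * β ≤ lam * r := (div_le_iff₀' hlam).1 (le_max_right _ _)
  suffices V t ≤ r ^ 2 from (Real.sqrt_le_sqrt this).trans_eq (Real.sqrt_sq hr)
  refine le_of_forall_pos_le_add fun ε hε => ?_
  have hV0 : V 0 ≤ r ^ 2 := by
    rcases le_total 0 (V 0) with h | h
    · calc V 0 = √(V 0) ^ 2 := (Real.sq_sqrt h).symm
        _ ≤ r ^ 2 := pow_le_pow_left₀ (Real.sqrt_nonneg _) (le_max_left _ _) 2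
    · exact h.trans (sq_nonneg r)
  -- On the level set `V = r ^ 2 + ε` we have `√V > r ≥ 2β/λ`, so `V` strictly decreases there.
  refine image_le_of_deriv_right_lt_deriv_boundary (f' := V') (B' := 0)
    (fun x hx => (hV x hx.1).continuousAt.continuousWithinAt)
    (fun x hx => (hV x hx.1).hasDerivWithinAt) (by linarith) (fun _ => hasDerivAt_const _ _)
    (fun x hx hVx => ?_) ⟨ht, le_rfl⟩
  have hrs : r < √(V x) := (Real.lt_sqrt hr).2 (by rw [hVx]; linarith)
  have hsq : √(V x) ^ 2 = V x := Real.sq_sqrt (by rw [hVx]; positivity)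
  have hdec := hV' x hx.1
  show V' x < 0
  nlinarith [mul_pos (hr.trans_lt hrs) (mul_pos hlam (sub_pos.2 hrs))]

end Calculus

section Lyapunov

variable {ι κ : Type*} [Fintype ι] [Fintype κ]

theorem dotProduct_mulVec_nonneg_of_nonneg {W : Matrix κ κ ℝ} (hW : ∀ i j, 0 ≤ W i j)
    {x : κ → ℝ} (hx : 0 ≤ x) : 0 ≤ x ⬝ᵥ W *ᵥ x :=
  dotProduct_nonneg_of_nonneg hx fun i => dotProduct_nonneg_of_nonneg (hW i) hx

theorem lyapunov_derivative_le_of_lmi {M A : Matrix ι ι ℝ} {E : Matrix κ ι ℝ}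
    {W : Matrix κ κ ℝ} {lam β : ℝ} (hM : M.PosSemidef) (hW : ∀ i j, 0 ≤ W i j)
    (hLMI : (-(Aᵀ * M + M * A + Eᵀ * W * E + lam • M)).PosSemidef)
    {ω d : ι → ℝ} (hω : 0 ≤ E *ᵥ ω) (hd : √(d ⬝ᵥ M *ᵥ d) ≤ β) :
    (A *ᵥ ω + d) ⬝ᵥ M *ᵥ ω + ω ⬝ᵥ M *ᵥ (A *ᵥ ω + d) ≤
      -lam * (ω ⬝ᵥ M *ᵥ ω) + 2 * β * √(ω ⬝ᵥ M *ᵥ ω) := by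
  have hLMIω := hLMI.dotProduct_mulVec_nonneg ω
  simp only [star_trivial, neg_mulVec, add_mulVec, smul_mulVec, ← mulVec_mulVec,
    dotProduct_neg, dotProduct_add, dotProduct_smul, dotProduct_transpose_mulVec,
    smul_eq_mul] at hLMIω
  rw [dotProduct_comm (M *ᵥ ω), dotProduct_comm (W *ᵥ _)] at hLMIω
  have hcell := dotProduct_mulVec_nonneg_of_nonneg hW hω
  have hcs : d ⬝ᵥ M *ᵥ ω ≤ β * √(ω ⬝ᵥ M *ᵥ ω) :=
    (hM.dotProduct_mulVec_le d ω).trans (mul_le_mul_of_nonneg_right hd (Real.sqrt_nonneg _))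
  simp only [add_dotProduct, mulVec_add, dotProduct_add]
  rw [hM.dotProduct_mulVec_comm ω d]
  linarith

theorem norm_mulVec_le_of_posSemidef_sub {M : Matrix ι ι ℝ} {C : Matrix κ ι ℝ}
    (hCM : (M - Cᵀ * C).PosSemidef) (ω : ι → ℝ) :
    ‖(EuclideanSpace.equiv κ ℝ).symm (C *ᵥ ω)‖ ≤ √(ω ⬝ᵥ M *ᵥ ω) := by
  have h := hCM.dotProduct_mulVec_nonneg ω
  simp only [star_trivial, sub_mulVec, ← mulVec_mulVec, dotProduct_sub,
    dotProduct_transpose_mulVec, sub_nonneg] at h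
  rw [EuclideanSpace.norm_eq]
  refine Real.sqrt_le_sqrt (le_of_eq_of_le ?_ h)
  simp [dotProduct, sq]

end Lyapunov

section Interconnection

variable {n m p q : Type*} [Fintype n] [Fintype m] [Fintype p] [Fintype q]

theorem jointState_dynamics_eq {A : Matrix n n ℝ} {B : Matrix n p ℝ} {F : Matrix m m ℝ}
    {G : Matrix m q ℝ} {L : Matrix q m ℝ} {P : Matrix n m ℝ} {Q : Matrix p m ℝ}
    {R : Matrix p q ℝ} {K : Matrix p n ℝ} (hPF : P * F = A * P + B * Q)
    (x₁ : n → ℝ) (x₂ : m → ℝ) (u : q → ℝ) (c : n → ℝ) :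
    ((A *ᵥ x₁ + B *ᵥ (R *ᵥ u + (Q + R * L) *ᵥ x₂ + K *ᵥ (x₁ - P *ᵥ x₂)) + c
        - P *ᵥ ((F + G * L) *ᵥ x₂ + G *ᵥ u)) ⊕ᵥ ((F + G * L) *ᵥ x₂ + G *ᵥ u)) =
      fromBlocks (A + B * K) 0 0 (F + G * L) *ᵥ ((x₁ - P *ᵥ x₂) ⊕ᵥ x₂) +
        (((B * R - P * G) *ᵥ (L *ᵥ x₂) ⊕ᵥ 0) + ((B * R - P * G) *ᵥ u ⊕ᵥ G *ᵥ u) +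
          (c ⊕ᵥ 0)) := by
  have hPFx : P *ᵥ (F *ᵥ x₂) = A *ᵥ (P *ᵥ x₂) + B *ᵥ (Q *ᵥ x₂) := by
    rw [mulVec_mulVec, hPF, add_mulVec, mulVec_mulVec, mulVec_mulVec]
  rw [fromBlocks_mulVec]
  simp only [Sum.elim_comp_inl, Sum.elim_comp_inr, zero_mulVec, add_zero, zero_add,
    ← Sum.elim_add_add]
  congr 1
  simp only [add_mulVec, sub_mulVec, mulVec_add, mulVec_sub, ← mulVec_mulVec, hPFx]
  abel

end Interconnection

theorem stmt_12_general {n m p q k b : ℕ}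
    (A : Matrix (Fin n) (Fin n) ℝ) (B : Matrix (Fin n) (Fin p) ℝ)
    (C : Matrix (Fin k) (Fin n) ℝ)
    (F : Matrix (Fin m) (Fin m) ℝ) (G : Matrix (Fin m) (Fin q) ℝ)
    (H : Matrix (Fin k) (Fin m) ℝ) (L : Matrix (Fin q) (Fin m) ℝ)
    (P : Matrix (Fin n) (Fin m) ℝ) (Q : Matrix (Fin p) (Fin m) ℝ)
    (R : Matrix (Fin p) (Fin q) ℝ) (K : Matrix (Fin p) (Fin n) ℝ)
    (hH : H = C * P) (hPF : P * F = A * P + B * Q)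
    (M : Matrix (Fin n ⊕ Fin m) (Fin n ⊕ Fin m) ℝ) (hM : M.PosDef)
    (lam κ : ℝ) (hlam : 0 < lam) (hκ : 0 < κ)
    (E : Matrix (Fin b) (Fin n ⊕ Fin m) ℝ) (W : Matrix (Fin b) (Fin b) ℝ)
    (hWpos : ∀ i j, 0 ≤ W i j)
    (hCLMI : (M - (Matrix.fromCols C 0)ᵀ * Matrix.fromCols C 0).PosSemidef)
    (hLMI : (-((Matrix.fromBlocks (A + B * K) 0 0 (F + G * L))ᵀ * M
        + M * Matrix.fromBlocks (A + B * K) 0 0 (F + G * L)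
        + Eᵀ * W * E + lam • M)).PosSemidef)
    (x₁ : ℝ → Fin n → ℝ) (x₂ : ℝ → Fin m → ℝ)
    (u₁ : ℝ → Fin p → ℝ) (ubar₂ : ℝ → Fin q → ℝ) (c : ℝ → Fin n → ℝ)
    (β₁ β₂ β₃ : ℝ)
    (hx₁ : ∀ t ≥ (0 : ℝ), HasDerivAt x₁ (A *ᵥ x₁ t + B *ᵥ u₁ t + c t) t)
    (hu₁ : ∀ t ≥ (0 : ℝ),
      u₁ t = R *ᵥ ubar₂ t + (Q + R * L) *ᵥ x₂ t + K *ᵥ (x₁ t - P *ᵥ x₂ t))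
    (hx₂ : ∀ t ≥ (0 : ℝ), HasDerivAt x₂ ((F + G * L) *ᵥ x₂ t + G *ᵥ ubar₂ t) t)
    (hcell : ∀ t ≥ (0 : ℝ), ∀ i, 0 ≤ (E *ᵥ Sum.elim (x₁ t - P *ᵥ x₂ t) (x₂ t)) i)
    (hβ₁ : ∀ t ≥ (0 : ℝ),
      Real.sqrt (Sum.elim ((B * R - P * G) *ᵥ (L *ᵥ x₂ t)) 0 ⬝ᵥ
        M *ᵥ Sum.elim ((B * R - P * G) *ᵥ (L *ᵥ x₂ t)) 0) ≤ β₁)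
    (hβ₂ : ∀ t ≥ (0 : ℝ),
      Real.sqrt (Sum.elim ((B * R - P * G) *ᵥ ubar₂ t) (G *ᵥ ubar₂ t) ⬝ᵥ
        M *ᵥ Sum.elim ((B * R - P * G) *ᵥ ubar₂ t) (G *ᵥ ubar₂ t)) ≤ β₂)
    (hβ₃ : ∀ t ≥ (0 : ℝ),
      Real.sqrt (Sum.elim (c t) 0 ⬝ᵥ M *ᵥ Sum.elim (c t) 0) ≤ β₃) :
    ∀ t ≥ (0 : ℝ),
      ‖(EuclideanSpace.equiv (Fin k) ℝ).symm (C *ᵥ x₁ t - H *ᵥ x₂ t)‖ ≤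
        max (κ * ((1 / κ) * Real.sqrt (Sum.elim (x₁ 0 - P *ᵥ x₂ 0) (x₂ 0) ⬝ᵥ
            M *ᵥ Sum.elim (x₁ 0 - P *ᵥ x₂ 0) (x₂ 0))))
          ((2 / lam) * (β₁ + β₂ + β₃)) := by
  intro t ht
  set ω : ℝ → Fin n ⊕ Fin m → ℝ := fun s => (x₁ s - P *ᵥ x₂ s) ⊕ᵥ x₂ s
  set d : ℝ → Fin n ⊕ Fin m → ℝ := fun s => ((B * R - P * G) *ᵥ (L *ᵥ x₂ s) ⊕ᵥ 0) +
    ((B * R - P * G) *ᵥ ubar₂ s ⊕ᵥ G *ᵥ ubar₂ s) + (c s ⊕ᵥ 0)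
  have hω : ∀ s ≥ 0, HasDerivAt ω
      (fromBlocks (A + B * K) 0 0 (F + G * L) *ᵥ ω s + d s) s := fun s hs => by
    have h := ((hx₁ s hs).sub ((hx₂ s hs).matrix_mulVec P)).sumElim (hx₂ s hs)
    rwa [hu₁ s hs, jointState_dynamics_eq hPF] at h
  have hd : ∀ s ≥ 0, √(d s ⬝ᵥ M *ᵥ d s) ≤ β₁ + β₂ + β₃ := fun s hs => by
    have htri := hM.posSemidef.sqrt_dotProduct_mulVec_add_le
    exact (htri _ _).trans
      (add_le_add ((htri _ _).trans (add_le_add (hβ₁ s hs) (hβ₂ s hs))) (hβ₃ s hs))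
  have hV := fun s hs => (hω s hs).dotProduct ((hω s hs).matrix_mulVec M)
  have hV' := fun s hs =>
    lyapunov_derivative_le_of_lmi hM.posSemidef hWpos hLMI (hcell s hs) (hd s hs)
  have hCω : C *ᵥ x₁ t - H *ᵥ x₂ t = fromCols C 0 *ᵥ ω t := by
    rw [fromCols_mulVec_sumElim, zero_mulVec, add_zero, mulVec_sub, mulVec_mulVec, hH]
  calc ‖(EuclideanSpace.equiv (Fin k) ℝ).symm (C *ᵥ x₁ t - H *ᵥ x₂ t)‖
      ≤ √(ω t ⬝ᵥ M *ᵥ ω t) := hCω ▸ norm_mulVec_le_of_posSemidef_sub hCLMI (ω t)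
    _ ≤ max (√(ω 0 ⬝ᵥ M *ᵥ ω 0)) (2 * (β₁ + β₂ + β₃) / lam) :=
      sqrt_le_max_of_hasDerivAt_le hlam hV hV' ht
    _ = _ := by rw [← mul_assoc, mul_one_div_cancel hκ.ne', one_mul, div_mul_eq_mul_div]

/-- Theorem 1 of the paper, single-mode case with cell boundaries through the origin:
under the simulation-relation conditions `H = C P`, `P F = A P + B Q`, the LMIs
`M - C'ᵀ C' ⪰ 0` and `A'ᵀ M + M A' + Eᵀ W E + λ M ⪯ 0` (with
`A' = diag(A + B K, F + G L)`, `C' = [C 0]`), the interface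
`u₁ = R ū₂ + (Q + R L) x₂ + K (x₁ - P x₂)`, the joint state `ω = (x₁ - P x₂, x₂)`
remaining in the cell `E ω ≥ 0`, and the bounds `β₁, β₂, β₃` on the `M`-weighted norms
of `v₁ = ((B R - P G) L x₂, 0)`, `v₂ = ((B R - P G) ū₂, G ū₂)`, `c' = (c, 0)`, the
output error satisfies
`‖C x₁(t) - H x₂(t)‖ ≤ max (κ V(ω(0))) ((2/λ)(β₁ + β₂ + β₃))` for all `t ≥ 0`, where
`V(ω) = (1/κ)√(ωᵀMω)`. -/
theorem stmt_12 {n m p q k b : ℕ}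
    (A : Matrix (Fin n) (Fin n) ℝ) (B : Matrix (Fin n) (Fin p) ℝ)
    (C : Matrix (Fin k) (Fin n) ℝ)
    (F : Matrix (Fin m) (Fin m) ℝ) (G : Matrix (Fin m) (Fin q) ℝ)
    (H : Matrix (Fin k) (Fin m) ℝ) (L : Matrix (Fin q) (Fin m) ℝ)
    (P : Matrix (Fin n) (Fin m) ℝ) (Q : Matrix (Fin p) (Fin m) ℝ)
    (R : Matrix (Fin p) (Fin q) ℝ) (K : Matrix (Fin p) (Fin n) ℝ)
    (hH : H = C * P) (hPF : P * F = A * P + B * Q)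
    (M : Matrix (Fin n ⊕ Fin m) (Fin n ⊕ Fin m) ℝ) (hM : M.PosDef)
    (lam κ : ℝ) (hlam : 0 < lam) (hκ : 0 < κ)
    (E : Matrix (Fin b) (Fin n ⊕ Fin m) ℝ) (W : Matrix (Fin b) (Fin b) ℝ)
    (hW : W.IsSymm) (hWpos : ∀ i j, 0 ≤ W i j)
    (hCLMI : (M - (Matrix.fromCols C 0)ᵀ * Matrix.fromCols C 0).PosSemidef)
    (hLMI : (-((Matrix.fromBlocks (A + B * K) 0 0 (F + G * L))ᵀ * M
        + M * Matrix.fromBlocks (A + B * K) 0 0 (F + G * L)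
        + Eᵀ * W * E + lam • M)).PosSemidef)
    (x₁ : ℝ → Fin n → ℝ) (x₂ : ℝ → Fin m → ℝ)
    (u₁ : ℝ → Fin p → ℝ) (ubar₂ : ℝ → Fin q → ℝ) (c : ℝ → Fin n → ℝ)
    (β₁ β₂ β₃ : ℝ)
    (hx₁ : ∀ t ≥ (0 : ℝ), HasDerivAt x₁ (A *ᵥ x₁ t + B *ᵥ u₁ t + c t) t)
    (hu₁ : ∀ t ≥ (0 : ℝ),
      u₁ t = R *ᵥ ubar₂ t + (Q + R * L) *ᵥ x₂ t + K *ᵥ (x₁ t - P *ᵥ x₂ t))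
    (hx₂ : ∀ t ≥ (0 : ℝ), HasDerivAt x₂ ((F + G * L) *ᵥ x₂ t + G *ᵥ ubar₂ t) t)
    (hcell : ∀ t ≥ (0 : ℝ), ∀ i, 0 ≤ (E *ᵥ Sum.elim (x₁ t - P *ᵥ x₂ t) (x₂ t)) i)
    (hβ₁ : ∀ t ≥ (0 : ℝ),
      Real.sqrt (Sum.elim ((B * R - P * G) *ᵥ (L *ᵥ x₂ t)) 0 ⬝ᵥ
        M *ᵥ Sum.elim ((B * R - P * G) *ᵥ (L *ᵥ x₂ t)) 0) ≤ β₁)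
    (hβ₂ : ∀ t ≥ (0 : ℝ),
      Real.sqrt (Sum.elim ((B * R - P * G) *ᵥ ubar₂ t) (G *ᵥ ubar₂ t) ⬝ᵥ
        M *ᵥ Sum.elim ((B * R - P * G) *ᵥ ubar₂ t) (G *ᵥ ubar₂ t)) ≤ β₂)
    (hβ₃ : ∀ t ≥ (0 : ℝ),
      Real.sqrt (Sum.elim (c t) 0 ⬝ᵥ M *ᵥ Sum.elim (c t) 0) ≤ β₃) :
    ∀ t ≥ (0 : ℝ),
      ‖(EuclideanSpace.equiv (Fin k) ℝ).symm (C *ᵥ x₁ t - H *ᵥ x₂ t)‖ ≤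
        max (κ * ((1 / κ) * Real.sqrt (Sum.elim (x₁ 0 - P *ᵥ x₂ 0) (x₂ 0) ⬝ᵥ
            M *ᵥ Sum.elim (x₁ 0 - P *ᵥ x₂ 0) (x₂ 0))))
          ((2 / lam) * (β₁ + β₂ + β₃)) :=
  stmt_12_general A B C F G H L P Q R K hH hPF M hM lam κ hlam hκ E W hWpos hCLMI hLMI x₁ x₂ u₁
    ubar₂ c β₁ β₂ β₃ hx₁ hu₁ hx₂ hcell hβ₁ hβ₂ hβ₃
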